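/- Let |a⟩,|b⟩ ∈ H1, |c⟩,|d⟩ ∈ H2, |e⟩,|f⟩ ∈ H3 be unit vectors in 2-dimensional Hilbert spaces, and suppose the two product vectors v = |a,c,e⟩ and w = |b,d,f⟩ are orthogonal and generic in the sense that the factors are proportional (i.e. [a]=[b], [c]=[d], resp. [e]=[f]) in at most one of the three positions. Then any product vector lying in span{v, w} is proportional to v or to w. -/

import Mathlib

/-- Concrete tensor product of three qubit vectors. -/
noncomputable def tensor3 (a b c : EuclideanSpace ℂ (Fin 2)) :
    EuclideanSpace ℂ (Fin 2 × Fin 2 × Fin 2) :=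
  WithLp.toLp 2 (fun p : Fin 2 × Fin 2 × Fin 2 => a p.1 * b p.2.1 * c p.2.2)

/-- `y` is not proportional to `x`. -/
def NonProp {E : Type*} [AddCommGroup E] [Module ℂ E] (x y : E) : Prop :=
  ¬ ∃ c : ℂ, y = c • x

lemma exists_ne_zero_of_ne_zero (a : EuclideanSpace ℂ (Fin 2)) (ha : a ≠ 0) :
    ∃ i, a i ≠ 0 := by
  by_contra h
  push_neg at h
  exact ha (PiLp.ext fun i => by simp [h i])

/-- Key contraction lemma: if `a, b` are independent and
`x ⊗ y ⊗ z = α • a⊗c⊗e + β • b⊗d⊗f` with `α, β ≠ 0`, then `d ∥ c` and `f ∥ e`. -/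
lemma key_lemma (a b c d e f x y z : EuclideanSpace ℂ (Fin 2))
    (ha : a ≠ 0) (hnab : ¬∃ s : ℂ, b = s • a)
    (hc : c ≠ 0) (he : e ≠ 0) (hd : d ≠ 0) (hf : f ≠ 0)
    (α β : ℂ) (hα : α ≠ 0) (hβ : β ≠ 0)
    (heq : ∀ i j k, x i * y j * z k =
      α * (a i * c j * e k) + β * (b i * d j * f k)) :
    (∃ s : ℂ, d = s • c) ∧ (∃ s : ℂ, f = s • e) := by
  -- determinant of (a, b) is nonzero
  have hD : a 0 * b 1 - a 1 * b 0 ≠ 0 := by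
    intro hD0
    apply hnab
    have hcases : a 0 ≠ 0 ∨ a 1 ≠ 0 := by
      rcases exists_ne_zero_of_ne_zero a ha with ⟨i, hi⟩
      fin_cases i
      · exact Or.inl hi
      · exact Or.inr hi
    rcases hcases with hi | hi
    · refine ⟨b 0 / a 0, PiLp.ext fun j => ?_⟩
      fin_cases j <;> show b _ = b 0 / a 0 * a _ <;> simp only [Fin.zero_eta, Fin.mk_one] <;> field_simp <;>
        linear_combination hD0
    · refine ⟨b 1 / a 1, PiLp.ext fun j => ?_⟩
      fin_cases j <;> show b _ = b 1 / a 1 * a _ <;> simp only [Fin.zero_eta, Fin.mk_one] <;> field_simp <;>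
        linear_combination -hD0
  have hp : ∀ j k, (b 1 * x 0 - b 0 * x 1) * (y j * z k) =
      α * (a 0 * b 1 - a 1 * b 0) * (c j * e k) := by
    intro j k
    have h0 := heq 0 j k
    have h1 := heq 1 j k
    linear_combination b 1 * h0 - b 0 * h1
  have hq : ∀ j k, (a 0 * x 1 - a 1 * x 0) * (y j * z k) =
      β * (a 0 * b 1 - a 1 * b 0) * (d j * f k) := by
    intro j k
    have h0 := heq 0 j k
    have h1 := heq 1 j k
    linear_combination a 0 * h1 - a 1 * h0
  obtain ⟨j0, hj0⟩ := exists_ne_zero_of_ne_zero c hc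
  obtain ⟨k0, hk0⟩ := exists_ne_zero_of_ne_zero e he
  obtain ⟨j1, hj1⟩ := exists_ne_zero_of_ne_zero d hd
  obtain ⟨k1, hk1⟩ := exists_ne_zero_of_ne_zero f hf
  have hpne : (b 1 * x 0 - b 0 * x 1) ≠ 0 := by
    intro h
    have := hp j0 k0
    rw [h, zero_mul] at this
    exact (mul_ne_zero (mul_ne_zero hα hD) (mul_ne_zero hj0 hk0)) this.symm
  have hqne : (a 0 * x 1 - a 1 * x 0) ≠ 0 := by
    intro h
    have := hq j1 k1
    rw [h, zero_mul] at this
    exact (mul_ne_zero (mul_ne_zero hβ hD) (mul_ne_zero hj1 hk1)) this.symm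
  have hkey : ∀ j k, ((b 1 * x 0 - b 0 * x 1) * β) * (d j * f k) =
      ((a 0 * x 1 - a 1 * x 0) * α) * (c j * e k) := by
    intro j k
    refine mul_left_cancel₀ hD ?_
    linear_combination (a 0 * x 1 - a 1 * x 0) * hp j k -
      (b 1 * x 0 - b 0 * x 1) * hq j k
  constructor
  · refine ⟨(a 0 * x 1 - a 1 * x 0) * α * e k1 / ((b 1 * x 0 - b 0 * x 1) * β * f k1),
      PiLp.ext fun j => ?_⟩
    show d j = _ * c j
    rw [div_mul_eq_mul_div, eq_div_iff (mul_ne_zero (mul_ne_zero hpne hβ) hk1)]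
    first | linear_combination hkey j k1 | linear_combination -hkey j k1
  · refine ⟨(a 0 * x 1 - a 1 * x 0) * α * c j1 / ((b 1 * x 0 - b 0 * x 1) * β * d j1),
      PiLp.ext fun k => ?_⟩
    show f k = _ * e k
    rw [div_mul_eq_mul_div, eq_div_iff (mul_ne_zero (mul_ne_zero hpne hβ) hj1)]
    first | linear_combination hkey j1 k | linear_combination -hkey j1 k

/-- Let `v = a ⊗ c ⊗ e` and `w = b ⊗ d ⊗ f` be orthogonal unit three-qubit product vectors
whose factors are non-proportional in at least two of the three positions. Then every product
vector lying in the span of `v` and `w` is proportional to `v` or to `w`. -/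
theorem stmt7 (a b c d e f : EuclideanSpace ℂ (Fin 2))
    (ha : ‖a‖ = 1) (hb : ‖b‖ = 1) (hc : ‖c‖ = 1)
    (hd : ‖d‖ = 1) (he : ‖e‖ = 1) (hf : ‖f‖ = 1)
    (horth : (inner ℂ (tensor3 a c e) (tensor3 b d f) : ℂ) = 0)
    (hgen : (NonProp a b ∧ NonProp c d) ∨ (NonProp a b ∧ NonProp e f) ∨
      (NonProp c d ∧ NonProp e f))
    (x y z : EuclideanSpace ℂ (Fin 2))
    (hxyz : tensor3 x y z ≠ 0)
    (hmem : tensor3 x y z ∈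
      Submodule.span ℂ ({tensor3 a c e, tensor3 b d f} : Set (EuclideanSpace ℂ (Fin 2 × Fin 2 × Fin 2)))) :
    (∃ t : ℂ, tensor3 x y z = t • tensor3 a c e) ∨
    (∃ t : ℂ, tensor3 x y z = t • tensor3 b d f) := by
  have ha0 : a ≠ 0 := by intro h; rw [h, norm_zero] at ha; norm_num at ha
  have hb0 : b ≠ 0 := by intro h; rw [h, norm_zero] at hb; norm_num at hb
  have hc0 : c ≠ 0 := by intro h; rw [h, norm_zero] at hc; norm_num at hc
  have hd0 : d ≠ 0 := by intro h; rw [h, norm_zero] at hd; norm_num at hd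
  have he0 : e ≠ 0 := by intro h; rw [h, norm_zero] at he; norm_num at he
  have hf0 : f ≠ 0 := by intro h; rw [h, norm_zero] at hf; norm_num at hf
  rw [Submodule.mem_span_pair] at hmem
  obtain ⟨α, β, hsum⟩ := hmem
  by_cases hα : α = 0
  · right
    refine ⟨β, ?_⟩
    rw [← hsum, hα, zero_smul, zero_add]
  by_cases hβ : β = 0
  · left
    refine ⟨α, ?_⟩
    rw [← hsum, hβ, zero_smul, add_zero]
  exfalso
  have heq : ∀ i j k : Fin 2, x i * y j * z k =
      α * (a i * c j * e k) + β * (b i * d j * f k) := by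
    intro i j k
    have := congrArg (fun v => v (i, j, k)) hsum
    simpa [tensor3] using this.symm
  rcases hgen with ⟨hab, hcd⟩ | ⟨hab, hef⟩ | ⟨hcd, hef⟩
  · exact hcd (key_lemma a b c d e f x y z ha0 hab hc0 he0 hd0 hf0 α β hα hβ heq).1
  · exact hef (key_lemma a b c d e f x y z ha0 hab hc0 he0 hd0 hf0 α β hα hβ heq).2
  · -- use leg 2 as distinguishing: swap roles of first and second factors
    have heq' : ∀ j i k : Fin 2, y j * x i * z k =
        α * (c j * a i * e k) + β * (d j * b i * f k) := by
      intro j i k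
      linear_combination heq i j k
    exact hef (key_lemma c d a b e f y x z hc0 hcd ha0 he0 hb0 hf0 α β hα hβ heq').2
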